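/- arXiv:nlin/0404047 — 3 statements merged into one kernel-verified Lean document; each statement's English description precedes it below -/
import Mathlib

section
/- For nonnegative integers l and m, 1 = \sum_{t=0}^{\min(l,m)} q^{(l-t)(m-t)} \frac{(q)_l (q)_m}{(q)_t (q)_{l-t} (q)_{m-t}}, where (q)_k = \prod_{i=1}^{k}(1-q^i). -/
/-- `(q)_k = (1-q)(1-q^2)⋯(1-q^k)` -/
def qPoch (q : ℝ) (k : ℕ) : ℝ := ∏ i ∈ Finset.range k, (1 - q ^ (i + 1))

lemma qPoch_zero (q : ℝ) : qPoch q 0 = 1 := by simp [qPoch]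

lemma qPoch_succ (q : ℝ) (n : ℕ) :
    qPoch q (n + 1) = qPoch q n * (1 - q ^ (n + 1)) := by
  rw [qPoch, qPoch, Finset.prod_range_succ]

lemma one_sub_pow_ne_zero (q : ℝ) (hq : |q| < 1) (i : ℕ) : 1 - q ^ (i + 1) ≠ 0 := by
  have h : |q ^ (i + 1)| < 1 := by
    rw [abs_pow]
    exact pow_lt_one₀ (abs_nonneg q) hq (Nat.succ_ne_zero i)
  intro h0
  have : q ^ (i + 1) = 1 := by linarith
  rw [this] at h
  simp at h

lemma qPoch_ne_zero (q : ℝ) (hq : |q| < 1) (k : ℕ) : qPoch q k ≠ 0 := by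
  rw [qPoch]
  exact Finset.prod_ne_zero_iff.mpr fun i _ => one_sub_pow_ne_zero q hq i

lemma key_pointwise (q : ℝ) (hq : |q| < 1) (L m s : ℕ) (hsL : s ≤ L) (hsm : s < m) :
    q ^ ((L + 1 - (s + 1)) * (m + 1 - (s + 1))) * (qPoch q (L + 1) * qPoch q (m + 1)) /
      (qPoch q (s + 1) * qPoch q (L + 1 - (s + 1)) * qPoch q (m + 1 - (s + 1)))
    = q ^ (L + 1) * (q ^ ((L + 1 - (s + 1)) * (m - (s + 1))) * (qPoch q (L + 1) * qPoch q m) /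
        (qPoch q (s + 1) * qPoch q (L + 1 - (s + 1)) * qPoch q (m - (s + 1))))
      + (1 - q ^ (L + 1)) * (q ^ ((L - s) * (m - s)) * (qPoch q L * qPoch q m) /
        (qPoch q s * qPoch q (L - s) * qPoch q (m - s))) := by
  obtain ⟨a, rfl⟩ : ∃ a, L = s + a := ⟨L - s, by omega⟩
  obtain ⟨M, rfl⟩ : ∃ M, m = s + 1 + M := ⟨m - s - 1, by omega⟩
  simp only [show s + a + 1 - (s + 1) = a by omega, show s + 1 + M + 1 - (s + 1) = M + 1 by omega,
    show s + 1 + M - (s + 1) = M by omega, show s + a - s = a by omega,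
    show s + 1 + M - s = M + 1 by omega]
  have h1 : qPoch q (s + a + 1) = qPoch q (s + a) * (1 - q ^ (s + a + 1)) := qPoch_succ q (s + a)
  have h2 : qPoch q (s + 1 + M + 1) = qPoch q (s + 1 + M) * (1 - q ^ (s + 1 + M + 1)) :=
    qPoch_succ q (s + 1 + M)
  have h3 : qPoch q (s + 1) = qPoch q s * (1 - q ^ (s + 1)) := qPoch_succ q s
  have h4 : qPoch q (M + 1) = qPoch q M * (1 - q ^ (M + 1)) := qPoch_succ q M
  have h5 : qPoch q (s + 1 + M) ≠ 0 := qPoch_ne_zero q hq _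
  have h6 : qPoch q (s + a) ≠ 0 := qPoch_ne_zero q hq _
  have h7 : qPoch q s ≠ 0 := qPoch_ne_zero q hq _
  have h8 : qPoch q a ≠ 0 := qPoch_ne_zero q hq _
  have h9 : qPoch q M ≠ 0 := qPoch_ne_zero q hq _
  have h10 : (1 : ℝ) - q ^ (s + 1) ≠ 0 := one_sub_pow_ne_zero q hq s
  have h11 : (1 : ℝ) - q ^ (M + 1) ≠ 0 := one_sub_pow_ne_zero q hq M
  rw [h1, h2, h3, h4]
  field_simp
  ring

lemma boundary_zero (q : ℝ) (hq : |q| < 1) (l m : ℕ) :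
    q ^ ((l - 0) * (m + 1 - 0)) * (qPoch q l * qPoch q (m + 1)) /
      (qPoch q 0 * qPoch q (l - 0) * qPoch q (m + 1 - 0))
    = q ^ l * (q ^ ((l - 0) * (m - 0)) * (qPoch q l * qPoch q m) /
        (qPoch q 0 * qPoch q (l - 0) * qPoch q (m - 0))) := by
  simp only [Nat.sub_zero, qPoch_zero, one_mul]
  have hl : qPoch q l ≠ 0 := qPoch_ne_zero q hq l
  have hm : qPoch q m ≠ 0 := qPoch_ne_zero q hq m
  have hm1 : qPoch q (m + 1) ≠ 0 := qPoch_ne_zero q hq (m + 1)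
  rw [show l * (m + 1) = l + l * m by ring, pow_add]
  field_simp

lemma boundary_last (q : ℝ) (hq : |q| < 1) (L m : ℕ) (hm : m ≤ L) :
    q ^ ((L + 1 - (m + 1)) * (m + 1 - (m + 1))) * (qPoch q (L + 1) * qPoch q (m + 1)) /
      (qPoch q (m + 1) * qPoch q (L + 1 - (m + 1)) * qPoch q (m + 1 - (m + 1)))
    = (1 - q ^ (L + 1)) * (q ^ ((L - m) * (m - m)) * (qPoch q L * qPoch q m) /
        (qPoch q m * qPoch q (L - m) * qPoch q (m - m))) := by
  simp only [Nat.sub_self, show L + 1 - (m + 1) = L - m by omega, Nat.mul_zero, pow_zero,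
    qPoch_zero, one_mul, mul_one]
  have h1 : qPoch q (L + 1) = qPoch q L * (1 - q ^ (L + 1)) := qPoch_succ q L
  have h2 : qPoch q (m + 1) ≠ 0 := qPoch_ne_zero q hq (m + 1)
  have h3 : qPoch q (L - m) ≠ 0 := qPoch_ne_zero q hq (L - m)
  have h4 : qPoch q m ≠ 0 := qPoch_ne_zero q hq m
  have h5 : qPoch q L ≠ 0 := qPoch_ne_zero q hq L
  rw [h1]
  field_simp

theorem stmt_6 (q : ℝ) (hq : |q| < 1) (l m : ℕ) :
    1 = ∑ t ∈ Finset.range (min l m + 1),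
      q ^ ((l - t) * (m - t)) *
        (qPoch q l * qPoch q m) / (qPoch q t * qPoch q (l - t) * qPoch q (m - t)) := by
  induction m generalizing l with
  | zero =>
    simp only [Nat.min_zero, zero_add, Finset.sum_range_one, Nat.sub_zero, Nat.sub_self,
      Nat.mul_zero, pow_zero, qPoch_zero, one_mul, mul_one]
    exact (div_self (qPoch_ne_zero q hq l)).symm
  | succ m ih =>
    match l with
    | 0 =>
      simp only [Nat.zero_min, zero_add, Finset.sum_range_one, Nat.zero_sub, Nat.sub_zero,
        Nat.sub_self, Nat.zero_mul, pow_zero, qPoch_zero, one_mul]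
      exact (div_self (qPoch_ne_zero q hq (m + 1))).symm
    | (L + 1) =>
      rcases le_or_gt (L + 1) m with h | h
      · -- case L + 1 ≤ m
        have hmin1 : min (L + 1) (m + 1) = L + 1 := min_eq_left (by omega)
        rw [hmin1, Finset.sum_range_succ']
        rw [Finset.sum_congr rfl (fun i hi => key_pointwise q hq L m i
          (by have := Finset.mem_range.mp hi; omega)
          (by have := Finset.mem_range.mp hi; omega))]
        rw [Finset.sum_add_distrib, ← Finset.mul_sum, ← Finset.mul_sum]
        rw [boundary_zero q hq (L + 1) m]
        have e1 := ih (L + 1)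
        rw [min_eq_left h, Finset.sum_range_succ'] at e1
        have e2 := ih L
        rw [min_eq_left (by omega : L ≤ m)] at e2
        linear_combination (q ^ (L + 1)) * e1 + (1 - q ^ (L + 1)) * e2
      · -- case m < L + 1, i.e. m ≤ L
        have hmL : m ≤ L := by omega
        have hmin1 : min (L + 1) (m + 1) = m + 1 := min_eq_right (by omega)
        rw [hmin1, Finset.sum_range_succ, Finset.sum_range_succ']
        rw [Finset.sum_congr rfl (fun i hi => key_pointwise q hq L m i
          (by have := Finset.mem_range.mp hi; omega)
          (by have := Finset.mem_range.mp hi; omega))]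
        rw [Finset.sum_add_distrib, ← Finset.mul_sum, ← Finset.mul_sum]
        rw [boundary_zero q hq (L + 1) m, boundary_last q hq L m hmL]
        have e1 := ih (L + 1)
        rw [min_eq_right (show m ≤ L + 1 by omega), Finset.sum_range_succ'] at e1
        have e2 := ih L
        rw [min_eq_right hmL, Finset.sum_range_succ] at e2
        linear_combination (q ^ (L + 1)) * e1 + (1 - q ^ (L + 1)) * e2
end

section
/- Let S \in A \otimes End(C^2) be given by S = [[Q, P],[P', R]] where P,Q generate a Weyl algebra with PQ=qQP, R=Q^{-1}(1-aP^2), P'=-qaP. Then the A_1^{(1)} R-matrix R(z) satisfies R(z) \overset{2}{S}\overset{1}{S} = \overset{1}{S}\overset{2}{S} R(z), where \overset{1}{S} acts S on the first tensor factor of C^2\otimes C^2 (with algebra coefficients on the left) and \overset{2}{S} on the second. -/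
open Matrix

/-- The `A_1^{(1)}` R-matrix on `ℂ²⊗ℂ²`:
`R(z) = (1-q²z)(E₁₁⊗E₁₁+E₂₂⊗E₂₂) + q(1-z)(E₁₁⊗E₂₂+E₂₂⊗E₁₁)
       + (1-q²)(z E₂₁⊗E₁₂ + E₁₂⊗E₂₁)`. -/
def Rmat2 {K : Type*} [Field K] (q z : K) :
    Matrix (Fin 2 × Fin 2) (Fin 2 × Fin 2) K := fun p r =>
  if p = r then (if p.1 = p.2 then 1 - q ^ 2 * z else q * (1 - z))
  else if p = (1, 0) ∧ r = (0, 1) then (1 - q ^ 2) * z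
  else if p = (0, 1) ∧ r = (1, 0) then 1 - q ^ 2
  else 0

/-- `S` acting on the first tensor factor, with algebra coefficients on the left:
`S̄¹(α ⊗ vᵢ ⊗ vⱼ) = ∑ₖ (S k i * α) ⊗ vₖ ⊗ vⱼ`. -/
def act1 {A : Type*} [Ring A] (S : Matrix (Fin 2) (Fin 2) A) :
    Matrix (Fin 2 × Fin 2) (Fin 2 × Fin 2) A := fun p r =>
  if p.2 = r.2 then S p.1 r.1 else 0

/-- `S` acting on the second tensor factor. -/
def act2 {A : Type*} [Ring A] (S : Matrix (Fin 2) (Fin 2) A) :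
    Matrix (Fin 2 × Fin 2) (Fin 2 × Fin 2) A := fun p r =>
  if p.1 = r.1 then S p.2 r.2 else 0

set_option maxHeartbeats 2000000 in
theorem stmt_14 (K : Type*) [Field K] (A : Type*) [Ring A] [Algebra K A]
    (q z a : K) (hq : q ≠ 0) (P Q Pi Qi : A)
    (hP : P * Pi = 1) (hP' : Pi * P = 1)
    (hQ : Q * Qi = 1) (hQ' : Qi * Q = 1)
    (hPQ : P * Q = q • (Q * P))
    (S : Matrix (Fin 2) (Fin 2) A)
    (hS : S = !![Q, P; -((q * a) • P), Qi * (1 - a • (P * P))]) :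
    (Rmat2 q z).map (algebraMap K A) * act2 S * act1 S
      = act1 S * act2 S * (Rmat2 q z).map (algebraMap K A) := by
  have swap1 : ∀ x : A, P * (Q * x) = q • (Q * (P * x)) := by
    intro x
    rw [← mul_assoc, hPQ, smul_mul_assoc, mul_assoc]
  have hQiP : Qi * P = q • (P * Qi) := by
    have h : Qi * ((P * Q) * Qi) = Qi * ((q • (Q * P)) * Qi) := by rw [hPQ]
    rw [mul_assoc P Q Qi, hQ, mul_one] at h
    rw [smul_mul_assoc, mul_smul_comm, mul_assoc Q P Qi, ← mul_assoc Qi Q, hQ', one_mul] at h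
    exact h
  have swap2 : ∀ x : A, P * (Qi * x) = q⁻¹ • (Qi * (P * x)) := by
    intro x
    rw [← mul_assoc, ← mul_assoc]
    rw [show P * Qi = q⁻¹ • (Qi * P) by
      rw [hQiP]; rw [smul_smul, inv_mul_cancel₀ hq, one_smul]]
    rw [smul_mul_assoc, mul_assoc]
  have hPQi : P * Qi = q⁻¹ • (Qi * P) := by
    rw [hQiP, smul_smul, inv_mul_cancel₀ hq, one_smul]
  have c1 : ∀ x : A, Q * (Qi * x) = x := fun x => by rw [← mul_assoc, hQ, one_mul]
  have c2 : ∀ x : A, Qi * (Q * x) = x := fun x => by rw [← mul_assoc, hQ', one_mul]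
  ext ⟨i, j⟩ ⟨k, l⟩
  fin_cases i <;> fin_cases j <;> fin_cases k <;> fin_cases l <;>
    simp [Matrix.mul_apply, Fintype.sum_prod_type,
      Fin.sum_univ_two, Rmat2, act1, act2, hS, Matrix.map_apply, Prod.ext_iff] <;>
    simp only [Matrix.cons_val', Matrix.cons_val_zero, Matrix.cons_val_one, Matrix.head_cons,
      Matrix.head_fin_const, Matrix.empty_val', Matrix.cons_val_fin_one, Fin.isValue,
      map_sub, _root_.map_mul, _root_.map_one, map_pow, Algebra.algebraMap_eq_smul_one, smul_pow, one_pow,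
      smul_mul_assoc, mul_smul_comm, one_mul, mul_one, mul_sub, sub_mul, mul_add, add_mul,
      mul_assoc, mul_neg, neg_mul, neg_neg, smul_sub, smul_add, smul_neg, smul_smul,
      hPQ, hPQi, swap1, swap2, c1, c2, hQ, hQ'] <;>
    match_scalars <;> field_simp <;> ring
end

section
/- The A_{n-1}^{(1)} L operator satisfies L(z) = D(z) K_1 K_2 \cdots K_{n-1}, where D(z) = z\,diag(1,...,1,z^{-1}), K_i is the n x n matrix with entries (K_i)_{ii}=P'_i, (K_i)_{in}=R_i, (K_i)_{ni}=Q_i, (K_i)_{nn}=P_i, (K_i)_{jj}=1 for j\ne i,n, and all other entries zero, and L(z) has entries L(z)_{ii}=zP'_i for i<n, L(z)_{nn}=P_1P_2\cdots P_{n-1}, L(z)_{ij}=zR_iP_{i+1}\cdots P_{j-1}Q_j for i<j<n, L(z)_{in}=zR_iP_{i+1}\cdots P_{n-1} for i<n, L(z)_{nj}=P_1\cdots P_{j-1}Q_j for j<n, and L(z)_{ij}=0 for j<i<n. -/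
open Matrix

/-- The ordered product `P_i P_{i+1} ⋯ P_j` (equal to `1` when `i > j`). -/
def listProd {A : Type*} [Ring A] (P : ℕ → A) (i j : ℕ) : A :=
  ((List.range' i (j + 1 - i)).map P).prod

/-- The local propagation operator `K_i` (an `n × n` matrix):
`(K_i)_{ii} = P'_i`, `(K_i)_{in} = R_i`, `(K_i)_{ni} = Q_i`, `(K_i)_{nn} = P_i`,
`(K_i)_{jj} = 1` for `j ≠ i, n`, all other entries `0`.
Rows and columns are indexed by `Fin n`, shifted to the 1-based index `r+1`. -/
def Kop {A : Type*} [Ring A] (n : ℕ) (P Q P' R : ℕ → A) (i : ℕ) :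
    Matrix (Fin n) (Fin n) A := fun r c =>
  if r.1 + 1 = i ∧ c.1 + 1 = i then P' i
  else if r.1 + 1 = i ∧ c.1 + 1 = n then R i
  else if r.1 + 1 = n ∧ c.1 + 1 = i then Q i
  else if r.1 + 1 = n ∧ c.1 + 1 = n then P i
  else if r = c then 1 else 0

/-- The `A_{n-1}^{(1)}` L operator `L(z)`. -/
def Lop {K : Type*} [Field K] {A : Type*} [Ring A] [Algebra K A]
    (n : ℕ) (z : K) (P Q P' R : ℕ → A) : Matrix (Fin n) (Fin n) A := fun rr cc =>
  let i := rr.1 + 1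
  let j := cc.1 + 1
  if i = j then (if i < n then z • P' i else listProd P 1 (n - 1))
  else if j < i then (if i = n then listProd P 1 (j - 1) * Q j else 0)
  else if j = n then z • (R i * listProd P (i + 1) (n - 1))
  else z • (R i * (listProd P (i + 1) (j - 1) * Q j))

/-- `D(z) = z · diag(1, …, 1, z⁻¹)`, i.e. `diag(z, …, z, 1)`. -/
def Dop {K : Type*} [Field K] {A : Type*} [Ring A] [Algebra K A]
    (n : ℕ) (z : K) : Matrix (Fin n) (Fin n) A := fun r c =>
  if r = c then (if r.1 + 1 = n then (1 : A) else z • (1 : A)) else 0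

/- ### Auxiliary material for the proof -/

lemma listProd_nil {A : Type*} [Ring A] (P : ℕ → A) (i j : ℕ) (h : j < i) :
    listProd P i j = 1 := by
  unfold listProd
  rw [Nat.sub_eq_zero_of_le (by omega)]
  rfl

lemma listProd_concat {A : Type*} [Ring A] (P : ℕ → A) (i j : ℕ) (h : i ≤ j + 1) :
    listProd P i (j + 1) = listProd P i j * P (j + 1) := by
  unfold listProd
  rw [show j + 1 + 1 - i = (j + 1 - i) + 1 by omega, List.range'_concat,
    show i + 1 * (j + 1 - i) = j + 1 from by omega, List.map_append,
    List.prod_append, List.map_cons, List.map_nil, List.prod_cons,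
    List.prod_nil, mul_one]

/-- The partial product `K_1 K_2 ⋯ K_m`. -/
def Mmat {A : Type*} [Ring A] (n : ℕ) (P Q P' R : ℕ → A) (m : ℕ) :
    Matrix (Fin n) (Fin n) A := fun r c =>
  if r.1 + 1 = c.1 + 1 then
    (if r.1 + 1 = n then listProd P 1 m
     else if r.1 + 1 ≤ m then P' (r.1 + 1) else 1)
  else if r.1 + 1 = n then
    (if c.1 + 1 ≤ m then listProd P 1 (c.1 + 1 - 1) * Q (c.1 + 1) else 0)
  else if c.1 + 1 = n then
    (if r.1 + 1 ≤ m then R (r.1 + 1) * listProd P (r.1 + 1 + 1) m else 0)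
  else if r.1 + 1 < c.1 + 1 ∧ c.1 + 1 ≤ m then
    R (r.1 + 1) * (listProd P (r.1 + 1 + 1) (c.1 + 1 - 1) * Q (c.1 + 1))
  else 0

lemma Mmat_zero {A : Type*} [Ring A] (n : ℕ) (P Q P' R : ℕ → A) :
    Mmat n P Q P' R 0 = 1 := by
  ext r c
  have hrb := r.isLt
  have hcb := c.isLt
  simp only [Mmat, Matrix.one_apply, Fin.ext_iff]
  split_ifs <;> first
    | rfl
    | (exfalso; omega)
    | (exact listProd_nil P 1 0 (by omega))

lemma Kop_eval {A : Type*} [Ring A] {n : ℕ} (P Q P' R : ℕ → A) (i : ℕ)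
    (k c : Fin n) (hi : i ≠ n) :
    Kop n P Q P' R i k c =
      if k.1 + 1 = i then
        (if c.1 + 1 = i then P' i else if c.1 + 1 = n then R i else 0)
      else if k.1 + 1 = n then
        (if c.1 + 1 = i then Q i else if c.1 + 1 = n then P i else 0)
      else if k = c then 1 else 0 := by
  simp only [Kop, Fin.ext_iff]
  split_ifs <;> first | rfl | (exfalso; omega)

lemma Kop_sum {A : Type*} [Ring A] {n : ℕ} (P Q P' R : ℕ → A) (i : ℕ)
    (km kn : Fin n) (hkm : km.1 + 1 = i) (hkn : kn.1 + 1 = n) (hi : i ≠ n)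
    (f : Fin n → A) (c : Fin n) :
    ∑ k : Fin n, f k * Kop n P Q P' R i k c =
      if c.1 + 1 = i then f km * P' i + f kn * Q i
      else if c.1 + 1 = n then f km * R i + f kn * P i
      else f c := by
  have hne : km ≠ kn := by
    simp only [ne_eq, Fin.ext_iff]
    omega
  by_cases hc1 : c.1 + 1 = i
  · rw [if_pos hc1]
    have h0 : ∀ x : Fin n, x ≠ km ∧ x ≠ kn → f x * Kop n P Q P' R i x c = 0 := by
      rintro x ⟨hx1, hx2⟩
      have h1 : x.1 + 1 ≠ i := fun h => hx1 (Fin.ext (by omega))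
      have h2 : x.1 + 1 ≠ n := fun h => hx2 (Fin.ext (by omega))
      have h3 : x ≠ c := fun h => h1 (by rw [h]; exact hc1)
      rw [Kop_eval P Q P' R i x c hi, if_neg h1, if_neg h2, if_neg h3, mul_zero]
    rw [Fintype.sum_eq_add km kn hne h0,
      Kop_eval P Q P' R i km c hi, Kop_eval P Q P' R i kn c hi,
      if_pos hkm, if_pos hc1, if_neg (by omega), if_pos hkn, if_pos hc1]
  · by_cases hc2 : c.1 + 1 = n
    · rw [if_neg hc1, if_pos hc2]
      have h0 : ∀ x : Fin n, x ≠ km ∧ x ≠ kn → f x * Kop n P Q P' R i x c = 0 := by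
        rintro x ⟨hx1, hx2⟩
        have h1 : x.1 + 1 ≠ i := fun h => hx1 (Fin.ext (by omega))
        have h2 : x.1 + 1 ≠ n := fun h => hx2 (Fin.ext (by omega))
        have h3 : x ≠ c := fun h => h2 (by rw [h]; exact hc2)
        rw [Kop_eval P Q P' R i x c hi, if_neg h1, if_neg h2, if_neg h3, mul_zero]
      rw [Fintype.sum_eq_add km kn hne h0,
        Kop_eval P Q P' R i km c hi, Kop_eval P Q P' R i kn c hi,
        if_pos hkm, if_neg hc1, if_pos hc2, if_neg (by omega), if_pos hkn,
        if_neg hc1, if_pos hc2]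
    · rw [if_neg hc1, if_neg hc2]
      have h0 : ∀ x : Fin n, x ≠ c → f x * Kop n P Q P' R i x c = 0 := by
        intro x hx
        rw [Kop_eval P Q P' R i x c hi]
        by_cases e1 : x.1 + 1 = i
        · rw [if_pos e1, if_neg hc1, if_neg hc2, mul_zero]
        · by_cases e2 : x.1 + 1 = n
          · rw [if_neg e1, if_pos e2, if_neg hc1, if_neg hc2, mul_zero]
          · rw [if_neg e1, if_neg e2, if_neg hx, mul_zero]
      rw [Fintype.sum_eq_single c h0, Kop_eval P Q P' R i c c hi,
        if_neg hc1, if_neg hc2, if_pos rfl, mul_one]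

set_option maxHeartbeats 3000000 in
lemma Mmat_succ {A : Type*} [Ring A] {n : ℕ} (P Q P' R : ℕ → A) (m : ℕ)
    (hn : 2 ≤ n) (hm : m + 1 ≤ n - 1) :
    Mmat n P Q P' R m * Kop n P Q P' R (m + 1) = Mmat n P Q P' R (m + 1) := by
  ext r c
  have hrb := r.isLt
  have hcb := c.isLt
  rw [Matrix.mul_apply,
    Kop_sum P Q P' R (m + 1) ⟨m, by omega⟩ ⟨n - 1, by omega⟩ rfl
      (by show n - 1 + 1 = n; omega) (by omega) _ c]
  by_cases hc1 : c.1 + 1 = m + 1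
  · rw [if_pos hc1]
    by_cases hr1 : r.1 + 1 = n
    · simp only [Mmat, hc1, hr1, Nat.add_sub_cancel]
      split_ifs <;> first
        | rfl | (exfalso; omega)
        | (rw [listProd_concat P 1 m (by omega)]; noncomm_ring; done)
        | (rw [listProd_nil P (m + 1 + 1) (m + 1) (by omega)]; noncomm_ring; done)
        | (rw [listProd_concat P (r.1 + 1 + 1) m (by omega)]; noncomm_ring; done)
        | (noncomm_ring; done)
    · by_cases hr2 : r.1 + 1 = m + 1
      · simp only [Mmat, hc1, hr2, Nat.add_sub_cancel]
        split_ifs <;> first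
          | rfl | (exfalso; omega)
          | (rw [listProd_concat P 1 m (by omega)]; noncomm_ring; done)
          | (rw [listProd_nil P (m + 1 + 1) (m + 1) (by omega)]; noncomm_ring; done)
          | (rw [listProd_concat P (r.1 + 1 + 1) m (by omega)]; noncomm_ring; done)
          | (noncomm_ring; done)
      · simp only [Mmat, hc1, Nat.add_sub_cancel]
        split_ifs <;> first
          | rfl | (exfalso; omega)
          | (rw [listProd_concat P 1 m (by omega)]; noncomm_ring; done)
          | (rw [listProd_nil P (m + 1 + 1) (m + 1) (by omega)]; noncomm_ring; done)
          | (rw [listProd_concat P (r.1 + 1 + 1) m (by omega)]; noncomm_ring; done)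
          | (noncomm_ring; done)
  · by_cases hc2 : c.1 + 1 = n
    · rw [if_neg hc1, if_pos hc2]
      by_cases hr1 : r.1 + 1 = n
      · simp only [Mmat, hc2, hr1, Nat.add_sub_cancel]
        split_ifs <;> first
          | rfl | (exfalso; omega)
          | (rw [listProd_concat P 1 m (by omega)]; noncomm_ring; done)
          | (rw [listProd_nil P (m + 1 + 1) (m + 1) (by omega)]; noncomm_ring; done)
          | (rw [listProd_concat P (r.1 + 1 + 1) m (by omega)]; noncomm_ring; done)
          | (noncomm_ring; done)
      · by_cases hr2 : r.1 + 1 = m + 1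
        · simp only [Mmat, hc2, hr2, Nat.add_sub_cancel]
          split_ifs <;> first
            | rfl | (exfalso; omega)
            | (rw [listProd_concat P 1 m (by omega)]; noncomm_ring; done)
            | (rw [listProd_nil P (m + 1 + 1) (m + 1) (by omega)]; noncomm_ring; done)
            | (rw [listProd_concat P (r.1 + 1 + 1) m (by omega)]; noncomm_ring; done)
            | (noncomm_ring; done)
        · simp only [Mmat, hc2, Nat.add_sub_cancel]
          split_ifs <;> first
            | rfl | (exfalso; omega)
            | (rw [listProd_concat P 1 m (by omega)]; noncomm_ring; done)
            | (rw [listProd_nil P (m + 1 + 1) (m + 1) (by omega)]; noncomm_ring; done)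
            | (rw [listProd_concat P (r.1 + 1 + 1) m (by omega)]; noncomm_ring; done)
            | (noncomm_ring; done)
    · rw [if_neg hc1, if_neg hc2]
      simp only [Mmat]
      split_ifs <;> first | rfl | (exfalso; omega)

lemma Lop_eval {K : Type*} [Field K] {A : Type*} [Ring A] [Algebra K A]
    (n : ℕ) (z : K) (P Q P' R : ℕ → A) (r c : Fin n) :
    Lop n z P Q P' R r c =
      (if r.1 + 1 = c.1 + 1 then
        (if r.1 + 1 < n then z • P' (r.1 + 1) else listProd P 1 (n - 1))
      else if c.1 + 1 < r.1 + 1 then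
        (if r.1 + 1 = n then listProd P 1 (c.1 + 1 - 1) * Q (c.1 + 1) else 0)
      else if c.1 + 1 = n then z • (R (r.1 + 1) * listProd P (r.1 + 1 + 1) (n - 1))
      else z • (R (r.1 + 1) *
        (listProd P (r.1 + 1 + 1) (c.1 + 1 - 1) * Q (c.1 + 1)))) := rfl

set_option maxHeartbeats 1000000 in
/-- Factorization `L(z) = D(z) K₁ K₂ ⋯ K_{n-1}` of the `A_{n-1}^{(1)}` L operator. -/
theorem stmt_16 (K : Type*) [Field K] (A : Type*) [Ring A] [Algebra K A]
    (n : ℕ) (hn : 2 ≤ n) (q z : K) (hq : q ≠ 0) (hz : z ≠ 0) (a : ℕ → K)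
    (P Q Qi : ℕ → A)
    (hQi : ∀ i, 1 ≤ i → i ≤ n - 1 → Q i * Qi i = 1 ∧ Qi i * Q i = 1)
    (hPP : ∀ i j, 1 ≤ i → i ≤ n - 1 → 1 ≤ j → j ≤ n - 1 → P i * P j = P j * P i)
    (hQQ : ∀ i j, 1 ≤ i → i ≤ n - 1 → 1 ≤ j → j ≤ n - 1 → Q i * Q j = Q j * Q i)
    (hPQ : ∀ i j, 1 ≤ i → i ≤ n - 1 → 1 ≤ j → j ≤ n - 1 →
      P i * Q j = if i = j then q • (Q j * P i) else Q j * P i)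
    (P' R : ℕ → A)
    (hP' : ∀ i, P' i = -((q * a i) • P i))
    (hR : ∀ i, R i = Qi i * (1 - a i • (P i * P i))) :
    Lop n z P Q P' R
      = Dop (A := A) n z * ((List.range' 1 (n - 1)).map (Kop n P Q P' R)).prod := by
  have key : ∀ m, m ≤ n - 1 →
      ((List.range' 1 m).map (Kop n P Q P' R)).prod = Mmat n P Q P' R m := by
    intro m
    induction m with
    | zero =>
      intro _
      rw [Mmat_zero]
      rfl
    | succ m ih =>
      intro hm
      rw [List.range'_concat, List.map_append, List.prod_append,
        show 1 + 1 * m = m + 1 from by omega, ih (by omega)]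
      simp only [List.map_cons, List.map_nil, List.prod_cons, List.prod_nil, mul_one]
      exact Mmat_succ P Q P' R m hn hm
  rw [key (n - 1) le_rfl]
  ext r c
  have hrb := r.isLt
  have hcb := c.isLt
  rw [Matrix.mul_apply, Fintype.sum_eq_single r (fun x hx => by
    show Dop n z r x * _ = 0
    simp only [Dop]
    rw [if_neg (fun h => hx h.symm), zero_mul])]
  by_cases hr : r.1 + 1 = n
  · have hD : Dop (K := K) (A := A) n z r r = 1 := by
      simp [Dop, hr]
    rw [hD, one_mul, Lop_eval]
    simp only [Mmat]
    split_ifs <;> first | rfl | (exfalso; omega)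
  · have hD : Dop (K := K) (A := A) n z r r = z • (1 : A) := by
      simp [Dop, hr]
    rw [hD, smul_mul_assoc, one_mul, Lop_eval]
    simp only [Mmat]
    split_ifs <;> first | rfl | (exfalso; omega) | simp
end
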